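/- For every n ≥ 2 and every well-rounded lattice L in ℝⁿ possessing a weakly nearly orthogonal basis, |S(L)| ≤ 4n − 2. -/

import Mathlib

open scoped RealInnerProductSpace
open Submodule Metric MeasureTheory

noncomputable section

abbrev Evec (n : ℕ) := EuclideanSpace ℝ (Fin n)

/-- The lattice generated (over ℤ) by the vectors `b 0, …, b (n-1)`. -/
def latticeOf {n : ℕ} (b : Fin n → Evec n) : Set (Evec n) :=
  {x | ∃ c : Fin n → ℤ, x = ∑ i, (c i : ℝ) • b i}

/-- The set of minimal vectors `S(L)` of a lattice `L`. -/
def minVecs {n : ℕ} (L : Set (Evec n)) : Set (Evec n) :=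
  {x | x ∈ L ∧ x ≠ 0 ∧ ∀ y ∈ L, y ≠ 0 → ‖x‖ ≤ ‖y‖}

/-- `L` is well-rounded: its minimal vectors span `ℝⁿ`. -/
def IsWellRounded {n : ℕ} (L : Set (Evec n)) : Prop :=
  Submodule.span ℝ (minVecs L) = ⊤

/-- `L` has minimal norm `m`. -/
def hasMinNorm {n : ℕ} (L : Set (Evec n)) (m : ℝ) : Prop :=
  (∃ x ∈ L, x ≠ 0 ∧ ‖x‖ = m) ∧ ∀ x ∈ L, x ≠ 0 → m ≤ ‖x‖

/-- The angle in `[0, π/2]` between a vector `v` and a subspace `V`,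
whose cosine is `‖proj_V v‖ / ‖v‖`. -/
def subAngle {n : ℕ} (v : Evec n) (V : Submodule ℝ (Evec n)) : ℝ :=
  Real.arccos (‖(orthogonalProjection V v : Evec n)‖ / ‖v‖)

/-- The ordered basis `b` is weakly θ-orthogonal. -/
def WeaklyOrth {n : ℕ} (θ : ℝ) (b : Fin n → Evec n) : Prop :=
  ∀ i : Fin n, 0 < (i : ℕ) →
    θ ≤ subAngle (b i) (Submodule.span ℝ (b '' {j | j < i}))

/-- The basis `b` is θ-orthogonal: every ordering of it is weakly θ-orthogonal. -/
def Orth {n : ℕ} (θ : ℝ) (b : Fin n → Evec n) : Prop :=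
  ∀ σ : Equiv.Perm (Fin n), WeaklyOrth θ (b ∘ σ)

/-- A nearly orthogonal basis is a π/3-orthogonal basis. -/
def NearlyOrth {n : ℕ} (b : Fin n → Evec n) : Prop := Orth (Real.pi / 3) b

/-- A weakly nearly orthogonal basis is a weakly π/3-orthogonal basis. -/
def WeaklyNearlyOrth {n : ℕ} (b : Fin n → Evec n) : Prop := WeaklyOrth (Real.pi / 3) b

/-- Coherence `C(L)` of a lattice. -/
def coherence {n : ℕ} (L : Set (Evec n)) : ℝ :=
  sSup {t | ∃ x ∈ minVecs L, ∃ y ∈ minVecs L, x ≠ y ∧ x ≠ -y ∧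
    t = abs ⟪x, y⟫ / (‖x‖ * ‖y‖)}

/-- `μ(B)`: minimal absolute cosine of angles between distinct basis vectors. -/
def muB {n : ℕ} (b : Fin n → Evec n) : ℝ :=
  sInf {t | ∃ i j : Fin n, i ≠ j ∧ t = abs ⟪b i, b j⟫ / (‖b i‖ * ‖b j‖)}

/-- `ν(B)`: maximal absolute cosine of angles between distinct basis vectors. -/
def nuB {n : ℕ} (b : Fin n → Evec n) : ℝ :=
  sSup {t | ∃ i j : Fin n, i ≠ j ∧ t = abs ⟪b i, b j⟫ / (‖b i‖ * ‖b j‖)}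

/-- The determinant of the lattice with basis `b`. -/
def latDet {n : ℕ} (b : Fin n → Evec n) : ℝ :=
  |(Matrix.of fun i j : Fin n => b j i).det|

/-- Packing density of a lattice with basis `b` and minimal norm `m`:
`ω_n · m^n / (2^n · det L)`. -/
def packDensity {n : ℕ} (m : ℝ) (b : Fin n → Evec n) : ℝ :=
  (volume (ball (0 : Evec n) 1)).toReal * m ^ n / (2 ^ n * latDet b)

/-- `L` is strongly eutactic. -/
def StronglyEutactic {n : ℕ} (L : Set (Evec n)) : Prop :=
  ∃ c : ℝ, 0 < c ∧ ∀ v : Evec n, ‖v‖ ^ 2 = c * ∑ᶠ x ∈ minVecs L, ⟪v, x⟫ ^ 2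

/-- `L` is perfect: `{x xᵀ : x ∈ S(L)}` spans the symmetric `n × n` matrices. -/
def IsPerfect {n : ℕ} (L : Set (Evec n)) : Prop :=
  ∀ A : Matrix (Fin n) (Fin n) ℝ, A.IsSymm →
    A ∈ Submodule.span ℝ ((fun x : Evec n => Matrix.of fun i j => x i * x j) '' minVecs L)

end

/-!
Let `x` be a minimal vector, `b k` the last basis vector in its expansion, with coefficient
`c ∈ ℤ ∖ {0}`, and `P` the orthogonal projection onto `V = span {b j | j < k}`. Then
`x = P x + c • (b k - P b k)`, and weak π/3-orthogonality gives
`‖b k - P b k‖² ≥ 3/4 ‖b k‖² ≥ 3/4 ‖x‖²`; hence `c = ±1` and `‖P x‖ ≤ ‖x‖ / 2`.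
Two distinct minimal vectors `x, y` with the same `(k, c)` satisfy `x - y = P x - P y`, of norm
at least `|L| ≥ 2 ‖P x‖, 2 ‖P y‖`, which forces `P y = -P x`. So each pair `(k, c)` accounts for at
most two minimal vectors, and for at most one when `k = 0` (then `V = 0`):
`|S(L)| ≤ 2 + 4 (n - 1)`.
-/

open Finset Real

section InnerProductSpace

variable {E : Type*} [NormedAddCommGroup E] [InnerProductSpace ℝ E]

theorem eq_neg_of_two_mul_norm_le_norm_sub {u v : E} (hu : 2 * ‖u‖ ≤ ‖u - v‖)
    (hv : 2 * ‖v‖ ≤ ‖u - v‖) : v = -u := by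
  have hpar := parallelogram_law_with_norm ℝ u v
  have huv : ‖u + v‖ = 0 := by
    nlinarith [norm_nonneg u, norm_nonneg v, norm_nonneg (u + v), norm_nonneg (u - v)]
  exact eq_neg_of_add_eq_zero_right (norm_eq_zero.1 huv)

variable (V : Submodule ℝ E) [V.HasOrthogonalProjection]

theorem norm_sq_eq_norm_starProjection_sq_add (x : E) :
    ‖x‖ ^ 2 = ‖V.starProjection x‖ ^ 2 + ‖x - V.starProjection x‖ ^ 2 := by
  rw [← starProjection_orthogonal_val]
  exact norm_sq_eq_add_norm_sq_starProjection x V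

theorem norm_sq_eq_of_sub_smul_mem {x v : E} {c : ℝ} (h : x - c • v ∈ V) :
    ‖x‖ ^ 2 = ‖V.starProjection x‖ ^ 2 + c ^ 2 * ‖v - V.starProjection v‖ ^ 2 := by
  have hx : x - V.starProjection x = c • (v - V.starProjection v) := by
    have := V.starProjection_eq_self_iff.2 h
    rw [map_sub, map_smul] at this
    rw [smul_sub]
    linear_combination (norm := module) -this
  rw [norm_sq_eq_norm_starProjection_sq_add V x, hx, norm_smul, mul_pow, Real.norm_eq_abs, sq_abs]

/-- The projections of the points of `F` to `V` are pairwise antipodal and determine the points. -/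
theorem encard_le_two_of_sub_mem {F : Set E} (hsub : ∀ x ∈ F, ∀ y ∈ F, x - y ∈ V)
    (hsep : ∀ x ∈ F, ∀ y ∈ F, x ≠ y → 2 * ‖V.starProjection x‖ ≤ ‖x - y‖) :
    F.encard ≤ 2 := by
  rcases F.eq_empty_or_nonempty with rfl | ⟨a, ha⟩
  · simp
  have hP : ∀ x ∈ F, ∀ y ∈ F, x - y = V.starProjection x - V.starProjection y := fun x hx y hy => by
    rw [← map_sub, V.starProjection_eq_self_iff.2 (hsub x hx y hy)]
  have hinj : Set.InjOn V.starProjection F := fun x hx y hy hxy =>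
    sub_eq_zero.1 (by rw [hP x hx y hy, hxy, sub_self])
  have himage : V.starProjection '' F ⊆ {V.starProjection a, -V.starProjection a} := by
    rintro _ ⟨x, hx, rfl⟩
    by_cases hxa : x = a
    · simp [hxa]
    refine Or.inr (eq_neg_of_two_mul_norm_le_norm_sub ?_ ?_) <;> rw [← hP a ha x hx]
    · exact hsep a ha x hx (Ne.symm hxa)
    · rw [norm_sub_rev]
      exact hsep x hx a ha hxa
  calc F.encard = (V.starProjection '' F).encard := hinj.encard_image.symm
    _ ≤ ({V.starProjection a, -V.starProjection a} : Set E).encard := Set.encard_le_encard himage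
    _ ≤ 2 := (Set.encard_insert_le _ _).trans (by norm_num)

end InnerProductSpace

theorem norm_starProjection_le_cos_mul {n : ℕ} {v : Evec n} {V : Submodule ℝ (Evec n)} {θ : ℝ}
    (hθ : 0 ≤ θ) (h : θ ≤ subAngle v V) : ‖V.starProjection v‖ ≤ cos θ * ‖v‖ := by
  rcases eq_or_ne v 0 with rfl | hv
  · simp
  have hv : 0 < ‖v‖ := norm_pos_iff.2 hv
  have hcos : cos (arccos (‖V.starProjection v‖ / ‖v‖)) ≤ cos θ :=
    cos_le_cos_of_nonneg_of_le_pi hθ (arccos_le_pi _) h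
  rwa [cos_arccos (by linarith [div_nonneg (norm_nonneg (V.starProjection v)) hv.le])
    (div_le_one_of_le₀ (V.norm_starProjection_apply_le v) hv.le), div_le_iff₀ hv] at hcos

section Lattice

variable {n : ℕ} {b : Fin n → Evec n}

theorem latticeOf_eq_span (b : Fin n → Evec n) : latticeOf b = span ℤ (Set.range b) := by
  ext x
  simp [latticeOf, mem_span_range_iff_exists_fun, Int.cast_smul_eq_zsmul, eq_comm]

theorem mem_latticeOf_self (b : Fin n → Evec n) (k : Fin n) : b k ∈ latticeOf b := by
  rw [latticeOf_eq_span]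
  exact subset_span (Set.mem_range_self k)

theorem sub_mem_latticeOf {x y : Evec n} (hx : x ∈ latticeOf b) (hy : y ∈ latticeOf b) :
    x - y ∈ latticeOf b := by
  rw [latticeOf_eq_span] at *
  exact sub_mem hx hy

theorem norm_le_norm_sub_of_mem_minVecs {x y : Evec n} (hx : x ∈ minVecs (latticeOf b))
    (hy : y ∈ minVecs (latticeOf b)) (hxy : x ≠ y) : ‖x‖ ≤ ‖x - y‖ :=
  hx.2.2 _ (sub_mem_latticeOf hx.1 hy.1) (sub_ne_zero.2 hxy)

theorem exists_sub_intCast_smul_mem_span_lt {x : Evec n} (hx : x ∈ latticeOf b) (hx0 : x ≠ 0) :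
    ∃ k : Fin n, ∃ c : ℤ, c ≠ 0 ∧ x - (c : ℝ) • b k ∈ span ℝ (b '' {j | j < k}) := by
  obtain ⟨a, rfl⟩ := hx
  set s := univ.filter fun i => a i ≠ 0
  have hs : s.Nonempty := by
    by_contra hs
    have ha : ∀ i, a i = 0 := by simpa [s, not_nonempty_iff_eq_empty, filter_eq_empty_iff] using hs
    exact hx0 (by simp [ha])
  refine ⟨s.max' hs, a (s.max' hs), (mem_filter.1 (s.max'_mem hs)).2, ?_⟩
  rw [← sum_erase_add _ _ (mem_univ (s.max' hs)), add_sub_cancel_right]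
  refine sum_mem fun i hi => ?_
  rcases lt_or_gt_of_ne (ne_of_mem_erase hi) with h | h
  · exact smul_mem _ _ (subset_span ⟨i, h, rfl⟩)
  · have : a i = 0 := by
      by_contra hai
      exact (s.le_max' i (by simp [s, hai])).not_gt h
    simp [this]

end Lattice

section WeaklyNearlyOrth

variable {n : ℕ} {b : Fin n → Evec n}

theorem span_image_lt_eq_bot (b : Fin n → Evec n) {k : Fin n} (hk : (k : ℕ) = 0) :
    span ℝ (b '' {j | j < k}) = ⊥ := by
  have : {j : Fin n | j < k} = ∅ := by
    ext j
    simp [Fin.lt_def, hk]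
  simp [this]

theorem norm_starProjection_le_half (hW : WeaklyNearlyOrth b) (k : Fin n) :
    ‖(span ℝ (b '' {j | j < k})).starProjection (b k)‖ ≤ ‖b k‖ / 2 := by
  rcases Nat.eq_zero_or_pos k with hk | hk
  · simp only [span_image_lt_eq_bot b hk, starProjection_bot, zero_apply,
      norm_zero]
    positivity
  · have := norm_starProjection_le_cos_mul (by positivity) (hW k hk)
    rw [cos_pi_div_three] at this
    linarith

theorem three_div_four_mul_sq_le_norm_sub_starProjection_sq (hW : WeaklyNearlyOrth b)
    (k : Fin n) :
    3 / 4 * ‖b k‖ ^ 2 ≤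
      ‖b k - (span ℝ (b '' {j | j < k})).starProjection (b k)‖ ^ 2 := by
  have hsplit := norm_sq_eq_norm_starProjection_sq_add (span ℝ (b '' {j | j < k})) (b k)
  have hhalf := norm_starProjection_le_half hW k
  nlinarith [norm_nonneg ((span ℝ (b '' {j | j < k})).starProjection (b k))]

theorem eq_one_or_eq_neg_one_and_two_mul_norm_starProjection_le (hb : ∀ k, b k ≠ 0)
    (hW : WeaklyNearlyOrth b) {x : Evec n} (hx : x ∈ minVecs (latticeOf b)) {k : Fin n}
    {c : ℤ} (hc : c ≠ 0) (hxk : x - (c : ℝ) • b k ∈ span ℝ (b '' {j | j < k})) :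
    (c = 1 ∨ c = -1) ∧ 2 * ‖(span ℝ (b '' {j | j < k})).starProjection x‖ ≤ ‖x‖ := by
  set P := (span ℝ (b '' {j | j < k})).starProjection
  have hsplit := norm_sq_eq_of_sub_smul_mem _ hxk
  have hq := three_div_four_mul_sq_le_norm_sub_starProjection_sq hW k
  have hxb : ‖x‖ ^ 2 ≤ ‖b k‖ ^ 2 := by
    gcongr
    exact hx.2.2 _ (mem_latticeOf_self b k) (hb k)
  have hx0 : 0 < ‖x‖ := norm_pos_iff.2 hx.2.1
  have hc1 : (1 : ℝ) ≤ (c : ℝ) ^ 2 := by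
    rw [one_le_sq_iff_one_le_abs]
    exact_mod_cast Int.one_le_abs hc
  have key : ‖P x‖ ^ 2 + 3 / 4 * (c : ℝ) ^ 2 * ‖x‖ ^ 2 ≤ ‖x‖ ^ 2 := by
    nlinarith
  constructor
  · have hc4 : (c : ℝ) ^ 2 < 2 ^ 2 := by nlinarith
    have := abs_lt_of_sq_lt_sq' (by exact_mod_cast hc4 : c ^ 2 < 2 ^ 2) (by norm_num)
    omega
  · have : (2 * ‖P x‖) ^ 2 ≤ ‖x‖ ^ 2 := by nlinarith
    exact (pow_le_pow_iff_left₀ (by positivity) (norm_nonneg _) two_ne_zero).1 this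

/-- The minimal vectors whose expansion in `b` has last nonzero term `c • b k`. -/
def minVecsLeading (b : Fin n → Evec n) (k : Fin n) (c : ℤ) : Set (Evec n) :=
  {x ∈ minVecs (latticeOf b) | x - (c : ℝ) • b k ∈ span ℝ (b '' {j | j < k})}

theorem exists_mem_minVecsLeading (hb : ∀ k, b k ≠ 0) (hW : WeaklyNearlyOrth b) {x : Evec n}
    (hx : x ∈ minVecs (latticeOf b)) :
    ∃ k, ∃ c ∈ ({-1, 1} : Finset ℤ), x ∈ minVecsLeading b k c := by
  obtain ⟨k, c, hc, hxk⟩ := exists_sub_intCast_smul_mem_span_lt hx.1 hx.2.1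
  refine ⟨k, c, ?_, hx, hxk⟩
  rcases (eq_one_or_eq_neg_one_and_two_mul_norm_starProjection_le hb hW hx hc hxk).1
    with rfl | rfl <;> simp

theorem encard_minVecsLeading_le (hb : ∀ k, b k ≠ 0) (hW : WeaklyNearlyOrth b) (k : Fin n)
    {c : ℤ} (hc : c ≠ 0) :
    (minVecsLeading b k c).encard ≤ ((if (k : ℕ) = 0 then 1 else 2 : ℕ) : ℕ∞) := by
  split_ifs with hk
  · refine (Set.encard_le_encard fun x hx => ?_).trans (Set.encard_singleton ((c : ℝ) • b k)).le
    have := hx.2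
    rwa [span_image_lt_eq_bot b hk, mem_bot, sub_eq_zero] at this
  · refine encard_le_two_of_sub_mem (span ℝ (b '' {j | j < k})) (fun x hx y hy => ?_)
      fun x hx y hy hxy => ?_
    · simpa using sub_mem hx.2 hy.2
    · exact (eq_one_or_eq_neg_one_and_two_mul_norm_starProjection_le hb hW hx.1 hc hx.2).2.trans
        (norm_le_norm_sub_of_mem_minVecs hx.1 hy.1 hxy)

end WeaklyNearlyOrth

theorem sum_ite_eq_four_mul_sub_two (n : ℕ) :
    ∑ t ∈ (univ : Finset (Fin n)) ×ˢ ({-1, 1} : Finset ℤ), (if (t.1 : ℕ) = 0 then 1 else 2) =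
      4 * n - 2 := by
  rw [sum_product]
  cases n with
  | zero => rfl
  | succ n =>
    simp only [Fin.sum_univ_succ, Fin.val_zero, Fin.val_succ, sum_const, card_univ,
      Fintype.card_fin, Nat.add_one_ne_zero, if_true, if_false, smul_eq_mul]
    rw [card_pair (by decide)]
    omega

theorem stmt_11_general (n : ℕ) (b : Fin n → Evec n)
    (hb : LinearIndependent ℝ b) (hW : WeaklyNearlyOrth b) :
    (minVecs (latticeOf b)).ncard ≤ 4 * n - 2 := by
  set T := (univ : Finset (Fin n)) ×ˢ ({-1, 1} : Finset ℤ)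
  have hcover : minVecs (latticeOf b) ⊆ ⋃ t ∈ T, minVecsLeading b t.1 t.2 := by
    intro x hx
    obtain ⟨k, c, hc, hxk⟩ := exists_mem_minVecsLeading hb.ne_zero hW hx
    exact Set.mem_iUnion₂.2 ⟨(k, c), mem_product.2 ⟨mem_univ k, hc⟩, hxk⟩
  have hcard : (minVecs (latticeOf b)).encard ≤ (4 * n - 2 : ℕ) :=
    calc (minVecs (latticeOf b)).encard ≤ ∑ t ∈ T, (minVecsLeading b t.1 t.2).encard :=
          (Set.encard_le_encard hcover).trans (T.set_encard_biUnion_le _)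
      _ ≤ ∑ t ∈ T, ((if (t.1 : ℕ) = 0 then 1 else 2 : ℕ) : ℕ∞) := sum_le_sum fun t ht =>
          encard_minVecsLeading_le hb.ne_zero hW t.1 fun hc => by simp [hc, T] at ht
      _ = (4 * n - 2 : ℕ) := by rw [← Nat.cast_sum, sum_ite_eq_four_mul_sub_two]
  exact (Set.encard_le_coe_iff_finite_ncard_le.1 hcard).2

/-- a well-rounded lattice with a weakly nearly orthogonal basis
has at most `4n - 2` minimal vectors. -/
theorem stmt_11 (n : ℕ) (hn : 2 ≤ n) (b : Fin n → Evec n)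
    (hb : LinearIndependent ℝ b) (hW : WeaklyNearlyOrth b)
    (hWR : IsWellRounded (latticeOf b)) :
    (minVecs (latticeOf b)).ncard ≤ 4 * n - 2 :=
  stmt_11_general n b hb hW
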